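/- arXiv:1411.0793 — 2 statements merged into one kernel-verified Lean document; each statement's English description precedes it below -/
import Mathlib

section
/- Let Θ ⊆ ℝ^p, let w : [0,1] → [0,∞) be continuous, and let F : [0,1] × ℝ^d × Θ → ℝ^d be continuous and satisfy the uniform Lipschitz condition ‖F(t, y, η) − F(t, y', η)‖ ≤ L‖y − y'‖ for all t ∈ [0,1], y, y' ∈ ℝ^d, η ∈ Θ. Then for any two continuously differentiable functions f, f0 : [0,1] → ℝ^d and every η ∈ Θ, |R_f(η) − R_{f0}(η)| ≤ (∫₀¹ ‖f'(t) − f0'(t)‖² w(t) dt)^{1/2} + L (∫₀¹ w(t) dt)^{1/2} · sup_{t∈[0,1]} ‖f(t) − f0(t)‖, where R_g(η) = (∫₀¹ ‖g'(t) − F(t, g(t), η)‖² w(t) dt)^{1/2}. -/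
open MeasureTheory Set ENNReal

/- Write `N(v) = (∫_K ‖v‖² w)^{1/2}` (`weightedL2Norm`), so that `R_g(η) = N(g' - F(·, g, η))`.
Since `N(v)` is the `L²(μ|_K)` norm of `√w • v`, it obeys the triangle inequality, hence
`|R_f(η) - R_{f0}(η)| ≤ N(f' - f0') + N(F(·, f0, η) - F(·, f, η))`, and the Lipschitz
condition bounds the last integrand pointwise by `L sup ‖f - f0‖`. -/

noncomputable def weightedL2Norm {X E : Type*} [MeasurableSpace X] [NormedAddCommGroup E]
    (μ : Measure X) (K : Set X) (w : X → ℝ) (v : X → E) : ℝ :=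
  √(∫ t in K, ‖v t‖ ^ 2 * w t ∂μ)

lemma subsingleton_of_norm_sub_le_mul_of_neg {E F : Type*} [NormedAddCommGroup E]
    [NormedAddCommGroup F] {g : E → F} {L : ℝ} (hL : L < 0)
    (hg : ∀ y y', ‖g y - g y'‖ ≤ L * ‖y - y'‖) : Subsingleton E := by
  refine ⟨fun y y' => sub_eq_zero.1 (norm_le_zero_iff.1 ?_)⟩
  nlinarith [hg y y', norm_nonneg (y - y'), norm_nonneg (g y - g y')]

lemma IsCompact.le_ciSup_of_continuousOn {X : Type*} [TopologicalSpace X] {K : Set X}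
    (hK : IsCompact K) {g : X → ℝ} (hg : ContinuousOn g K) {t : X} (ht : t ∈ K) :
    g t ≤ ⨆ s : K, g s :=
  le_ciSup (f := fun s : K => g s) (image_eq_range g K ▸ hK.bddAbove_image hg) ⟨t, ht⟩

section General

variable {α E : Type*} [MeasurableSpace α] {μ : Measure α} [NormedAddCommGroup E]

lemma sqrt_integral_norm_sq_eq_norm_toLp {A : α → E} (hA : MemLp A 2 μ) :
    √(∫ a, ‖A a‖ ^ 2 ∂μ) = ‖hA.toLp A‖ := by
  rw [Lp.norm_toLp, hA.eLpNorm_eq_integral_rpow_norm two_ne_zero ENNReal.ofNat_ne_top,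
    ENNReal.toReal_ofReal (by positivity), Real.sqrt_eq_rpow]
  norm_num

lemma weightedL2Norm_le_of_norm_le {K : Set α} (hK : MeasurableSet K) {w : α → ℝ}
    (hw : IntegrableOn w K μ) (hw0 : ∀ t ∈ K, 0 ≤ w t) {v : α → E} {c : ℝ} (hc : 0 ≤ c)
    (hv : ∀ t ∈ K, ‖v t‖ ≤ c) :
    weightedL2Norm μ K w v ≤ c * √(∫ t in K, w t ∂μ) := by
  have hmono : ∫ t in K, ‖v t‖ ^ 2 * w t ∂μ ≤ ∫ t in K, c ^ 2 * w t ∂μ := by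
    refine integral_mono_of_nonneg ?_ (hw.const_mul _) (ae_restrict_of_forall_mem hK ?_)
    · exact ae_restrict_of_forall_mem hK fun t ht => by have := hw0 t ht; positivity
    · intro t ht
      exact mul_le_mul_of_nonneg_right (pow_le_pow_left₀ (norm_nonneg _) (hv t ht) 2) (hw0 t ht)
  calc weightedL2Norm μ K w v ≤ √(∫ t in K, c ^ 2 * w t ∂μ) := Real.sqrt_le_sqrt hmono
    _ = c * √(∫ t in K, w t ∂μ) := by
      rw [integral_const_mul, Real.sqrt_mul (sq_nonneg c), Real.sqrt_sq hc]

lemma weightedL2Norm_eq_norm_toLp [NormedSpace ℝ E] {K : Set α} (hK : MeasurableSet K)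
    {w : α → ℝ} (hw0 : ∀ t ∈ K, 0 ≤ w t) {v A : α → E} (hA : MemLp A 2 (μ.restrict K))
    (hAv : ∀ t ∈ K, A t = √(w t) • v t) :
    weightedL2Norm μ K w v = ‖hA.toLp A‖ := by
  rw [← sqrt_integral_norm_sq_eq_norm_toLp, weightedL2Norm]
  congr 1
  refine setIntegral_congr_fun hK fun t ht => ?_
  rw [hAv t ht, norm_smul, Real.norm_of_nonneg (Real.sqrt_nonneg _), mul_pow,
    Real.sq_sqrt (hw0 t ht), mul_comm]

end General

section Compact

variable {X E : Type*} [TopologicalSpace X] [T2Space X] [MeasurableSpace X]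
  [OpensMeasurableSpace X] {μ : Measure X} [IsFiniteMeasureOnCompacts μ]
  [NormedAddCommGroup E] {K : Set X}

lemma ContinuousOn.memLp_of_isCompact {f : X → E} (hK : IsCompact K) (hf : ContinuousOn f K)
    (p : ℝ≥0∞) : MemLp f p (μ.restrict K) := by
  have : IsFiniteMeasure (μ.restrict K) := isFiniteMeasure_restrict.2 hK.measure_ne_top
  obtain ⟨C, hC⟩ := hK.exists_bound_of_continuousOn hf
  exact .of_bound (hf.aestronglyMeasurable_of_isCompact hK hK.measurableSet) C
    (ae_restrict_of_forall_mem hK.measurableSet hC)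

variable [NormedSpace ℝ E] {w : X → ℝ}

lemma abs_weightedL2Norm_sub_le (hK : IsCompact K) (hw : ContinuousOn w K)
    (hw0 : ∀ t ∈ K, 0 ≤ w t) {u v : X → E} (hu : ContinuousOn u K) (hv : ContinuousOn v K) :
    |weightedL2Norm μ K w u - weightedL2Norm μ K w v| ≤ weightedL2Norm μ K w (u - v) := by
  have hu₂ := (hw.sqrt.smul hu).memLp_of_isCompact (μ := μ) hK 2
  have hv₂ := (hw.sqrt.smul hv).memLp_of_isCompact (μ := μ) hK 2
  rw [weightedL2Norm_eq_norm_toLp hK.measurableSet hw0 hu₂ fun _ _ => rfl,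
    weightedL2Norm_eq_norm_toLp hK.measurableSet hw0 hv₂ fun _ _ => rfl,
    weightedL2Norm_eq_norm_toLp hK.measurableSet hw0 (v := u - v) (hu₂.sub hv₂)
      fun t _ => (smul_sub _ _ _).symm, MemLp.toLp_sub]
  exact abs_norm_sub_norm_le _ _

lemma weightedL2Norm_add_le (hK : IsCompact K) (hw : ContinuousOn w K)
    (hw0 : ∀ t ∈ K, 0 ≤ w t) {u v : X → E} (hu : ContinuousOn u K) (hv : ContinuousOn v K) :
    weightedL2Norm μ K w (u + v) ≤ weightedL2Norm μ K w u + weightedL2Norm μ K w v := by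
  have hu₂ := (hw.sqrt.smul hu).memLp_of_isCompact (μ := μ) hK 2
  have hv₂ := (hw.sqrt.smul hv).memLp_of_isCompact (μ := μ) hK 2
  rw [weightedL2Norm_eq_norm_toLp hK.measurableSet hw0 hu₂ fun _ _ => rfl,
    weightedL2Norm_eq_norm_toLp hK.measurableSet hw0 hv₂ fun _ _ => rfl,
    weightedL2Norm_eq_norm_toLp hK.measurableSet hw0 (v := u + v) (hu₂.add hv₂)
      fun t _ => (smul_add _ _ _).symm, MemLp.toLp_add]
  exact norm_add_le _ _

end Compact

/-- **Stability of the two-step criterion under perturbation of the curve.**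
`|R_f(η) − R_{f0}(η)| ≤ (∫₀¹‖f'−f0'‖²w)^{1/2} + L (∫₀¹ w)^{1/2} sup_{[0,1]}‖f − f0‖`. -/
theorem criterion_stability
    {p d : ℕ} (Θ : Set (EuclideanSpace ℝ (Fin p)))
    (w : ℝ → ℝ) (hw : ContinuousOn w (Icc (0:ℝ) 1)) (hw0 : ∀ t ∈ Icc (0:ℝ) 1, 0 ≤ w t)
    (F : ℝ → EuclideanSpace ℝ (Fin d) → EuclideanSpace ℝ (Fin p) → EuclideanSpace ℝ (Fin d))
    (hFcont : Continuous fun q : ℝ × EuclideanSpace ℝ (Fin d) × EuclideanSpace ℝ (Fin p) =>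
      F q.1 q.2.1 q.2.2)
    (L : ℝ)
    (hFLip : ∀ t ∈ Icc (0:ℝ) 1, ∀ (y y' : EuclideanSpace ℝ (Fin d)), ∀ η ∈ Θ,
      ‖F t y η - F t y' η‖ ≤ L * ‖y - y'‖)
    (R : (ℝ → EuclideanSpace ℝ (Fin d)) → EuclideanSpace ℝ (Fin p) → ℝ)
    (hR : ∀ (g : ℝ → EuclideanSpace ℝ (Fin d)) (η : EuclideanSpace ℝ (Fin p)),
      R g η = Real.sqrt (∫ t in Icc (0:ℝ) 1, ‖deriv g t - F t (g t) η‖ ^ 2 * w t))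
    (f f0 : ℝ → EuclideanSpace ℝ (Fin d))
    (hf : ContDiff ℝ 1 f) (hf0 : ContDiff ℝ 1 f0)
    (η : EuclideanSpace ℝ (Fin p)) (hη : η ∈ Θ) :
    |R f η - R f0 η| ≤
      Real.sqrt (∫ t in Icc (0:ℝ) 1, ‖deriv f t - deriv f0 t‖ ^ 2 * w t)
        + L * Real.sqrt (∫ t in Icc (0:ℝ) 1, w t)
            * (⨆ t : Icc (0:ℝ) 1, ‖f t - f0 t‖) := by
  by_cases hL : 0 ≤ L
  swap
  · have := subsingleton_of_norm_sub_le_mul_of_neg (not_le.1 hL)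
      fun y y' => hFLip 0 ⟨le_rfl, zero_le_one⟩ y y' η hη
    obtain rfl : f = f0 := funext fun t => Subsingleton.elim _ _
    simp
  have hI : IsCompact (Icc (0:ℝ) 1) := isCompact_Icc
  have hFc : ∀ g : ℝ → EuclideanSpace ℝ (Fin d), Continuous g →
      ContinuousOn (fun t => F t (g t) η) (Icc 0 1) := fun g hg =>
    (hFcont.comp (continuous_id.prodMk (hg.prodMk continuous_const))).continuousOn
  have hsup : ∀ t ∈ Icc (0:ℝ) 1, ‖f t - f0 t‖ ≤ ⨆ s : Icc (0:ℝ) 1, ‖f s - f0 s‖ :=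
    fun t => hI.le_ciSup_of_continuousOn (hf.continuous.sub hf0.continuous).norm.continuousOn
  have hf' := (hf.continuous_deriv le_rfl).continuousOn (s := Icc 0 1)
  have hf0' := (hf0.continuous_deriv le_rfl).continuousOn (s := Icc 0 1)
  calc |R f η - R f0 η|
      ≤ weightedL2Norm volume (Icc 0 1) w
          ((fun t => deriv f t - F t (f t) η) - fun t => deriv f0 t - F t (f0 t) η) := by
        rw [hR, hR]
        exact abs_weightedL2Norm_sub_le hI hw hw0 (hf'.sub (hFc f hf.continuous))
          (hf0'.sub (hFc f0 hf0.continuous))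
    _ = weightedL2Norm volume (Icc 0 1) w
          ((fun t => deriv f t - deriv f0 t) + fun t => F t (f0 t) η - F t (f t) η) := by
        congr 1; ext1 t; simp only [Pi.add_apply, Pi.sub_apply]; abel
    _ ≤ _ := by
        refine (weightedL2Norm_add_le hI hw hw0 (hf'.sub hf0')
          ((hFc f0 hf0.continuous).sub (hFc f hf.continuous))).trans (add_le_add le_rfl ?_)
        rw [mul_right_comm]
        refine weightedL2Norm_le_of_norm_le hI.measurableSet (hw.integrableOn_compact hI) hw0
          (mul_nonneg hL ((norm_nonneg _).trans (hsup 0 (by simp)))) fun t ht => ?_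
        calc ‖F t (f0 t) η - F t (f t) η‖ ≤ L * ‖f t - f0 t‖ := by
              rw [norm_sub_rev (f t)]; exact hFLip t ht _ _ η hη
          _ ≤ _ := mul_le_mul_of_nonneg_left (hsup t ht) hL
end

section
/- Let Σ be a k×k symmetric positive definite real matrix, let σ0 > 0, and let 0 < a < σ0 < b. Then there exists a constant C > 0 such that for every σ ∈ [a, b] and every μ ∈ ℝ^k, the total variation distance between the multivariate Gaussian distributions N(μ, σ²Σ) and N(μ, σ0²Σ) satisfies sup_{B Borel} |N(μ, σ²Σ)(B) − N(μ, σ0²Σ)(B)| ≤ C |σ − σ0|. -/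
open MeasureTheory Matrix

/-- The multivariate Gaussian measure `N(μ, Σ)` on `ℝ^k`, defined through its Lebesgue density
`x ↦ exp(−(x−μ)ᵀΣ⁻¹(x−μ)/2) / ((2π)^k det Σ)^{1/2}`. -/
noncomputable def gaussianMeasure {k : ℕ} (μ : Fin k → ℝ)
    (S : Matrix (Fin k) (Fin k) ℝ) : Measure (Fin k → ℝ) :=
  volume.withDensity fun x =>
    ENNReal.ofReal
      (Real.exp (-(1 / 2) * ((x - μ) ⬝ᵥ (S⁻¹ *ᵥ (x - μ)))) /
        Real.sqrt ((2 * Real.pi) ^ k * S.det))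

/-!
The density of `N(μ, s²Σ)` is `φₛ(x) = exp (-q / (2s²)) / (sᵏ √((2π)ᵏ det Σ))` with
`q = (x - μ)ᵀ Σ⁻¹ (x - μ)`, and `∂ₛ φₛ = φₛ (q / s³ - k / s)`. For `s ∈ [a, b]` this derivative is
dominated by `exp (-q / (2b²)) (q / a³ + k / a) / (aᵏ √((2π)ᵏ det Σ))`, which is integrable because
`q` is bounded below by a positive multiple of `|x - μ|²`. By the mean value theorem,
`∫ |φ_σ - φ_σ₀|`, which dominates the total variation distance, is at most `|σ - σ₀|` times the
integral of the dominating function; by translation invariance that integral does not depend on `μ`.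
-/

open Real Set

lemma exists_pos_mul_norm_sq_le_of_homogeneous {E : Type*} [NormedAddCommGroup E]
    [NormedSpace ℝ E] [FiniteDimensional ℝ E] {Q : E → ℝ} (hQ : Continuous Q)
    (hsmul : ∀ (t : ℝ) y, Q (t • y) = t ^ 2 * Q y) (hpos : ∀ y ≠ 0, 0 < Q y) :
    ∃ ε > 0, ∀ y, ε * ‖y‖ ^ 2 ≤ Q y := by
  have hQ0 : Q 0 = 0 := by simpa using hsmul 0 0
  rcases subsingleton_or_nontrivial E with hE | hE
  · exact ⟨1, one_pos, fun y => by simp [Subsingleton.elim y 0, hQ0]⟩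
  obtain ⟨z, hz, hmin⟩ := (isCompact_sphere (0 : E) 1).exists_isMinOn
    (NormedSpace.sphere_nonempty.2 zero_le_one) hQ.continuousOn
  have hz0 : z ≠ 0 := ne_zero_of_mem_unit_sphere ⟨z, hz⟩
  refine ⟨Q z, hpos z hz0, fun y => ?_⟩
  rcases eq_or_ne y 0 with rfl | hy
  · simp [hQ0]
  have hunit : ‖y‖⁻¹ • y ∈ Metric.sphere (0 : E) 1 := by
    simp [norm_smul, hy]
  calc Q z * ‖y‖ ^ 2 ≤ Q (‖y‖⁻¹ • y) * ‖y‖ ^ 2 := by gcongr; exact hmin hunit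
    _ = Q y := by rw [hsmul, inv_pow]; field_simp

lemma Matrix.PosDef.exists_pos_mul_sum_sq_le {ι : Type*} [Fintype ι] {M : Matrix ι ι ℝ}
    (hM : M.PosDef) : ∃ ε > 0, ∀ y : ι → ℝ, ε * ∑ i, y i ^ 2 ≤ y ⬝ᵥ M *ᵥ y := by
  obtain ⟨ε, hε, h⟩ := exists_pos_mul_norm_sq_le_of_homogeneous
    (Q := fun v : EuclideanSpace ℝ ι => v.ofLp ⬝ᵥ M *ᵥ v.ofLp) (by fun_prop)
    (fun t v => by
      simp only [WithLp.ofLp_smul, mulVec_smul, dotProduct_smul, smul_dotProduct, smul_eq_mul]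
      ring)
    (fun v hv => by simpa using hM.dotProduct_mulVec_pos (x := v.ofLp) (by simpa using hv))
  exact ⟨ε, hε, fun y => by simpa [EuclideanSpace.norm_sq_eq] using h (WithLp.toLp 2 y)⟩

lemma integrable_exp_neg_mul_sum_sq {ι : Type*} [Fintype ι] {δ : ℝ} (hδ : 0 < δ) :
    Integrable (fun x : ι → ℝ => exp (-δ * ∑ i, x i ^ 2)) := by
  simp_rw [Finset.mul_sum, Real.exp_sum]
  exact Integrable.fintype_prod (f := fun _ t => exp (-δ * t ^ 2))
    fun _ => integrable_exp_neg_mul_sq hδ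

lemma mul_exp_neg_mul_le {δ : ℝ} (hδ : 0 < δ) (t : ℝ) :
    t * exp (-δ * t) ≤ 2 / δ * exp (-(δ / 2) * t) := by
  have h : δ / 2 * t ≤ exp (δ / 2 * t) := by linarith [add_one_le_exp (δ / 2 * t)]
  calc t * exp (-δ * t) = 2 / δ * (δ / 2 * t) * exp (-δ * t) := by field_simp
    _ ≤ 2 / δ * exp (δ / 2 * t) * exp (-δ * t) := by gcongr
    _ = 2 / δ * exp (-(δ / 2) * t) := by rw [mul_assoc, ← exp_add]; ring_nf

/-- The density of `gaussianMeasure μ (s ^ 2 • S)` at a point `x` with `(x - μ)ᵀ S⁻¹ (x - μ) = r`,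
up to the factor `√((2π)^k det S)`. -/
noncomputable def scaledGaussianKernel (k : ℕ) (r s : ℝ) : ℝ :=
  exp (-(2 * s ^ 2)⁻¹ * r) / s ^ k

/-- A bound for `|∂ₛ scaledGaussianKernel k r s|` over `s ∈ [a, b]`. -/
noncomputable def scaledGaussianKernelDerivBound (k : ℕ) (a b r : ℝ) : ℝ :=
  exp (-(2 * b ^ 2)⁻¹ * r) / a ^ k * (r / a ^ 3 + k / a)

lemma hasDerivAt_scaledGaussianKernel (k : ℕ) (r : ℝ) {s : ℝ} (hs : s ≠ 0) :
    HasDerivAt (scaledGaussianKernel k r)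
      (scaledGaussianKernel k r s * (r / s ^ 3 - k / s)) s := by
  have hexp : HasDerivAt (fun s : ℝ => exp (-(2 * s ^ 2)⁻¹ * r))
      (exp (-(2 * s ^ 2)⁻¹ * r) * (r / s ^ 3)) s := by
    have hinner : HasDerivAt (fun s : ℝ => -(2 * s ^ 2)⁻¹ * r) (r / s ^ 3) s :=
      ((((hasDerivAt_pow 2 s).const_mul 2).inv (by positivity)).neg.mul_const r).congr_deriv
        (by field_simp; ring)
    exact hinner.exp
  refine (hexp.div (hasDerivAt_pow k s) (pow_ne_zero k hs)).congr_deriv ?_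
  unfold scaledGaussianKernel
  cases k with
  | zero => simp
  | succ n =>
    field_simp
    push_cast
    ring

lemma scaledGaussianKernel_nonneg (k : ℕ) (r : ℝ) {s : ℝ} (hs : 0 ≤ s) :
    0 ≤ scaledGaussianKernel k r s := by
  unfold scaledGaussianKernel; positivity

lemma abs_scaledGaussianKernel_sub_le (k : ℕ) {r a b σ σ₀ : ℝ} (hr : 0 ≤ r) (ha : 0 < a)
    (hσ : σ ∈ Icc a b) (hσ₀ : σ₀ ∈ Icc a b) :
    |scaledGaussianKernel k r σ - scaledGaussianKernel k r σ₀|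
      ≤ scaledGaussianKernelDerivBound k a b r * |σ - σ₀| := by
  have hderiv_le : ∀ s ∈ Icc a b, ‖scaledGaussianKernel k r s * (r / s ^ 3 - k / s)‖
      ≤ scaledGaussianKernelDerivBound k a b r := by
    rintro s ⟨has, hsb⟩
    have hs : 0 < s := ha.trans_le has
    rw [norm_mul, norm_of_nonneg (scaledGaussianKernel_nonneg k r hs.le),
      scaledGaussianKernelDerivBound]
    gcongr
    · unfold scaledGaussianKernel
      gcongr
    · calc ‖r / s ^ 3 - k / s‖ ≤ r / s ^ 3 + k / s := by
            have : 0 ≤ r / s ^ 3 := by positivity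
            have : 0 ≤ k / s := by positivity
            rw [norm_eq_abs, abs_le]
            constructor <;> linarith
        _ ≤ r / a ^ 3 + k / a := by gcongr
  simpa only [← norm_eq_abs] using (convex_Icc a b).norm_image_sub_le_of_norm_hasDerivWithin_le
    (fun s hs => (hasDerivAt_scaledGaussianKernel k r (ha.trans_le hs.1).ne').hasDerivWithinAt)
    hderiv_le hσ₀ hσ

namespace Matrix.PosDef

variable {ι : Type*} [Fintype ι] {M : Matrix ι ι ℝ}

lemma integrable_exp_neg_mul_dotProduct_mulVec (hM : M.PosDef) {δ : ℝ} (hδ : 0 < δ) :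
    Integrable (fun x : ι → ℝ => exp (-δ * (x ⬝ᵥ M *ᵥ x))) := by
  obtain ⟨ε, hε, h⟩ := hM.exists_pos_mul_sum_sq_le
  refine (integrable_exp_neg_mul_sum_sq (mul_pos hδ hε)).mono' (by fun_prop)
    (ae_of_all _ fun x => ?_)
  rw [norm_of_nonneg (exp_pos _).le, exp_le_exp]
  nlinarith [h x]

lemma integrable_dotProduct_mulVec_mul_exp_neg_mul (hM : M.PosDef) {δ : ℝ} (hδ : 0 < δ) :
    Integrable (fun x : ι → ℝ => (x ⬝ᵥ M *ᵥ x) * exp (-δ * (x ⬝ᵥ M *ᵥ x))) := by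
  refine ((hM.integrable_exp_neg_mul_dotProduct_mulVec (half_pos hδ)).const_mul (2 / δ)).mono'
    (by fun_prop) (ae_of_all _ fun x => ?_)
  have hq : 0 ≤ x ⬝ᵥ M *ᵥ x := by simpa using hM.posSemidef.dotProduct_mulVec_nonneg x
  rw [norm_of_nonneg (by positivity)]
  exact mul_exp_neg_mul_le hδ _

lemma integrable_scaledGaussianKernel (hM : M.PosDef) (k : ℕ) {s : ℝ} (hs : s ≠ 0) :
    Integrable (fun x : ι → ℝ => scaledGaussianKernel k (x ⬝ᵥ M *ᵥ x) s) :=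
  (hM.integrable_exp_neg_mul_dotProduct_mulVec (by positivity)).div_const _

lemma integrable_scaledGaussianKernelDerivBound (hM : M.PosDef) (k : ℕ) (a : ℝ) {b : ℝ}
    (hb : b ≠ 0) :
    Integrable (fun x : ι → ℝ => scaledGaussianKernelDerivBound k a b (x ⬝ᵥ M *ᵥ x)) := by
  have hδ : 0 < (2 * b ^ 2)⁻¹ := by positivity
  refine (((hM.integrable_dotProduct_mulVec_mul_exp_neg_mul hδ).const_mul (a ^ k * a ^ 3)⁻¹).add
    ((hM.integrable_exp_neg_mul_dotProduct_mulVec hδ).const_mul (k / (a * a ^ k)))).congr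
    (ae_of_all _ fun x => ?_)
  simp only [scaledGaussianKernelDerivBound, Pi.add_apply]
  ring

end Matrix.PosDef

lemma abs_toReal_withDensity_sub_le {α : Type*} [MeasurableSpace α] {ν : Measure α}
    {f g : α → ℝ} (hf : Integrable f ν) (hg : Integrable g ν) (hf₀ : 0 ≤ᵐ[ν] f)
    (hg₀ : 0 ≤ᵐ[ν] g) {B : Set α} (hB : MeasurableSet B) :
    |(ν.withDensity (fun x => ENNReal.ofReal (f x)) B).toReal
      - (ν.withDensity (fun x => ENNReal.ofReal (g x)) B).toReal| ≤ ∫ x, |f x - g x| ∂ν := by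
  rw [withDensity_apply _ hB, withDensity_apply _ hB,
    ← integral_eq_lintegral_of_nonneg_ae (ae_restrict_of_ae hf₀) hf.1.restrict,
    ← integral_eq_lintegral_of_nonneg_ae (ae_restrict_of_ae hg₀) hg.1.restrict,
    ← integral_sub hf.integrableOn hg.integrableOn]
  exact (abs_integral_le_integral_abs).trans
    (setIntegral_le_integral (hf.sub hg).abs (ae_of_all _ fun x => abs_nonneg _))

lemma gaussianMeasure_sq_smul {k : ℕ} (μ : Fin k → ℝ) {S : Matrix (Fin k) (Fin k) ℝ}
    (hS : IsUnit S.det) {s : ℝ} (hs : 0 < s) :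
    gaussianMeasure μ (s ^ 2 • S) = volume.withDensity fun x => ENNReal.ofReal
      (scaledGaussianKernel k ((x - μ) ⬝ᵥ S⁻¹ *ᵥ (x - μ)) s /
        √((2 * π) ^ k * S.det)) := by
  have hinv : (s ^ 2 • S)⁻¹ = (s ^ 2)⁻¹ • S⁻¹ :=
    inv_smul' S (Units.mk0 (s ^ 2) (by positivity)) hS
  have hsqrt : √((2 * π) ^ k * (s ^ 2 • S).det) = s ^ k * √((2 * π) ^ k * S.det) := by
    rw [det_smul, Fintype.card_fin, mul_left_comm, ← pow_mul, mul_comm 2 k, pow_mul,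
      sqrt_mul (by positivity), sqrt_sq (by positivity)]
  unfold gaussianMeasure scaledGaussianKernel
  congr with x
  rw [hinv, hsqrt, smul_mulVec, dotProduct_smul, smul_eq_mul, div_div]
  ring_nf

lemma abs_gaussianMeasure_sq_smul_sub_le {k : ℕ} {S : Matrix (Fin k) (Fin k) ℝ} (hS : S.PosDef)
    {a b σ σ₀ : ℝ} (ha : 0 < a) (hσ : σ ∈ Icc a b) (hσ₀ : σ₀ ∈ Icc a b) (μ : Fin k → ℝ)
    {B : Set (Fin k → ℝ)} (hB : MeasurableSet B) :
    |(gaussianMeasure μ (σ ^ 2 • S) B).toReal - (gaussianMeasure μ (σ₀ ^ 2 • S) B).toReal|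
      ≤ (∫ x, scaledGaussianKernelDerivBound k a b (x ⬝ᵥ S⁻¹ *ᵥ x)) / √((2 * π) ^ k * S.det)
        * |σ - σ₀| := by
  set q : (Fin k → ℝ) → ℝ := fun y => y ⬝ᵥ S⁻¹ *ᵥ y
  have hq : ∀ y, 0 ≤ q y := fun y => by simpa using hS.inv.posSemidef.dotProduct_mulVec_nonneg y
  set c := √((2 * π) ^ k * S.det)
  have hc : 0 < c := sqrt_pos.2 (by have := hS.det_pos; positivity)
  set f : ℝ → (Fin k → ℝ) → ℝ := fun s x => scaledGaussianKernel k (q (x - μ)) s / c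
  have hf : ∀ s ∈ Icc a b, Integrable (f s) := fun s hs =>
    ((hS.inv.integrable_scaledGaussianKernel k (ha.trans_le hs.1).ne').comp_sub_right μ).div_const c
  have hf₀ : ∀ s ∈ Icc a b, 0 ≤ᵐ[volume] f s := fun s hs => ae_of_all _ fun x =>
    div_nonneg (scaledGaussianKernel_nonneg k _ (ha.trans_le hs.1).le) hc.le
  have hbound : Integrable fun x => scaledGaussianKernelDerivBound k a b (q (x - μ)) / c :=
    ((hS.inv.integrable_scaledGaussianKernelDerivBound k a
      (ha.trans_le (hσ.1.trans hσ.2)).ne').comp_sub_right μ).div_const c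
  rw [gaussianMeasure_sq_smul μ (isUnit_iff_ne_zero.2 hS.det_pos.ne') (ha.trans_le hσ.1),
    gaussianMeasure_sq_smul μ (isUnit_iff_ne_zero.2 hS.det_pos.ne') (ha.trans_le hσ₀.1)]
  calc _ ≤ ∫ x, |f σ x - f σ₀ x| :=
        abs_toReal_withDensity_sub_le (hf σ hσ) (hf σ₀ hσ₀) (hf₀ σ hσ) (hf₀ σ₀ hσ₀) hB
    _ ≤ ∫ x, scaledGaussianKernelDerivBound k a b (q (x - μ)) / c * |σ - σ₀| := by
        refine integral_mono ((hf σ hσ).sub (hf σ₀ hσ₀)).abs (hbound.mul_const _) fun x => ?_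
        simp only [f, ← sub_div, abs_div, abs_of_pos hc, div_mul_eq_mul_div]
        gcongr
        exact abs_scaledGaussianKernel_sub_le k (hq _) ha hσ hσ₀
    _ = _ := by
        rw [integral_mul_const, integral_div,
          integral_sub_right_eq_self (fun x => scaledGaussianKernelDerivBound k a b (q x))]

/-- **Uniform total variation bound for Gaussian scale perturbations (proof of Theorem 3).**
There is `C > 0` such that for every `σ ∈ [a,b]` and every mean `μ`,
`sup_B |N(μ, σ²Σ)(B) − N(μ, σ0²Σ)(B)| ≤ C |σ − σ0|`. -/
theorem gaussian_total_variation_scale_perturbation {k : ℕ}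
    (S : Matrix (Fin k) (Fin k) ℝ) (hS : S.PosDef)
    (σ0 a b : ℝ) (ha : 0 < a) (haσ0 : a < σ0) (hσ0b : σ0 < b) :
    ∃ C > (0:ℝ), ∀ σ ∈ Set.Icc a b, ∀ μ : Fin k → ℝ,
      (⨆ B : {s : Set (Fin k → ℝ) // MeasurableSet s},
          |(gaussianMeasure μ (σ ^ 2 • S) B).toReal
            - (gaussianMeasure μ (σ0 ^ 2 • S) B).toReal|) ≤ C * |σ - σ0| := by
  set C := (∫ x, scaledGaussianKernelDerivBound k a b (x ⬝ᵥ S⁻¹ *ᵥ x))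
    / √((2 * π) ^ k * S.det)
  have hC : 0 ≤ C := by
    refine div_nonneg (integral_nonneg fun x => ?_) (sqrt_nonneg _)
    have : 0 ≤ x ⬝ᵥ S⁻¹ *ᵥ x := by simpa using hS.inv.posSemidef.dotProduct_mulVec_nonneg x
    unfold scaledGaussianKernelDerivBound
    positivity
  refine ⟨C + 1, by positivity, fun σ hσ μ => ciSup_le fun B => ?_⟩
  calc _ ≤ C * |σ - σ0| :=
        abs_gaussianMeasure_sq_smul_sub_le hS ha hσ ⟨haσ0.le, hσ0b.le⟩ μ B.2
    _ ≤ (C + 1) * |σ - σ0| := by gcongr; linarith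
end
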